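/- Let Λ = a_0 D + a_1 DxD + a_2 (Dx)² D, with transpose ^tΛ = −a_0 D + a_1 DxD − a_2 (Dx)² D on forms. Then for every polynomial f and form u: ^tΛ(fu) = f·^tΛ(u) − Λ(f)·u + 2a_1(f' + x f'')u + (2(a_1−3a_2) x f' − 3a_2 x² f'') u' − 3a_2 x² f' u''. -/
import Mathlib


open Polynomial

/-- `Dx` is the operator `p ↦ D(X * p)` on `ℂ[X]`. -/
noncomputable def Dx (p : ℂ[X]) : ℂ[X] := derivative (X * p)

/-- `Λ = a₀ D + a₁ DxD + a₂ (Dx)² D` on polynomials. -/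
noncomputable def Lam (a₀ a₁ a₂ : ℂ) (p : ℂ[X]) : ℂ[X] :=
  a₀ • derivative p + a₁ • Dx (derivative p) + a₂ • Dx^[2] (derivative p)

/-- Derivative of a form: `⟨Du, p⟩ = -⟨u, p'⟩`. -/
noncomputable def Dform (u : ℂ[X] →ₗ[ℂ] ℂ) : ℂ[X] →ₗ[ℂ] ℂ :=
  -(u ∘ₗ (derivative : ℂ[X] →ₗ[ℂ] ℂ[X]))

/-- Left multiplication of a form by a polynomial: `⟨fu, p⟩ = ⟨u, f p⟩`. -/
noncomputable def mulForm (f : ℂ[X]) (u : ℂ[X] →ₗ[ℂ] ℂ) : ℂ[X] →ₗ[ℂ] ℂ :=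
  u ∘ₗ LinearMap.mulLeft ℂ f

/-- `Dx` acting on forms: `u ↦ D(xu)`. -/
noncomputable def DxF (u : ℂ[X] →ₗ[ℂ] ℂ) : ℂ[X] →ₗ[ℂ] ℂ := Dform (mulForm X u)

/-- `^tΛ = -a₀ D + a₁ DxD - a₂ (Dx)² D` on forms. -/
noncomputable def tLam (a₀ a₁ a₂ : ℂ) (u : ℂ[X] →ₗ[ℂ] ℂ) : ℂ[X] →ₗ[ℂ] ℂ :=
  -a₀ • Dform u + a₁ • DxF (Dform u) - a₂ • DxF^[2] (Dform u)

theorem stmt15 (a₀ a₁ a₂ : ℂ) (f : ℂ[X]) (u : ℂ[X] →ₗ[ℂ] ℂ) :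
    tLam a₀ a₁ a₂ (mulForm f u) =
      mulForm f (tLam a₀ a₁ a₂ u) - mulForm (Lam a₀ a₁ a₂ f) u
        + (2 * a₁) • mulForm (derivative f + X * derivative^[2] f) u
        + mulForm ((2 * (a₁ - 3 * a₂)) • (X * derivative f)
            - (3 * a₂) • (X ^ 2 * derivative^[2] f)) (Dform u)
        - (3 * a₂) • mulForm (X ^ 2 * derivative f) (Dform (Dform u)) := by
  have hsm : ∀ (a : ℂ) (q : ℂ[X]), a * u q = u (a • q) := fun a q => (map_smul u a q).symm
  refine LinearMap.ext fun p => ?_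
  simp only [tLam, Dform, mulForm, DxF, Dx, Function.iterate_succ, Function.iterate_zero,
    Function.comp_apply, id_eq, LinearMap.sub_apply, LinearMap.add_apply, LinearMap.smul_apply,
    LinearMap.neg_apply, LinearMap.comp_apply, LinearMap.mulLeft_apply, smul_eq_mul, Lam,
    neg_neg]
  simp only [hsm, ← map_neg, ← map_sub, ← map_add]
  congr 1
  simp [derivative_mul, derivative_neg, derivative_one, derivative_ofNat, derivative_C, derivative_add, derivative_sub, derivative_smul, derivative_X,
    derivative_X_pow, Polynomial.smul_eq_C_mul, Nat.cast_ofNat, pow_one, map_mul, map_sub,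
    map_add, map_ofNat]
  ring
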